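/- arXiv:1301.4583 — 5 statements merged into one kernel-verified Lean document; each statement's English description precedes it below -/
import Mathlib

section
/- Let n_1 ≥ 2 and let G be a tree in the hypergraph sense (a connected n_1-uniform hypergraph with (n_1-1)·|E(G)|+1 vertices) with at least 2 edges. Then l(G) ≥ μ(G) + 2, i.e., the number of leaves of G is at least 2 plus Σ_{v : deg(v) > 2} (deg(v) - 2). -/
/-- The incidence (bipartite) graph of a hypergraph given by its incidence relation
`I : V → E → Prop`: a vertex `v` and an edge `e` are adjacent iff they are incident. -/
def incidenceGraph {V E : Type*} (I : V → E → Prop) : SimpleGraph (V ⊕ E) :=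
  SimpleGraph.fromRel (fun a b => ∃ v e, a = Sum.inl v ∧ b = Sum.inr e ∧ I v e)

/-- The degree of a vertex of a hypergraph: the number of edges incident to it. -/
noncomputable def hypDegree {V E : Type*} (I : V → E → Prop) (v : V) : ℕ :=
  {e | I v e}.ncard

/-- `μ(G) = Σ_{v : deg(v) > 2} (deg(v) - 2)` (truncated subtraction makes the
restriction to `deg(v) > 2` automatic). -/
noncomputable def hypMu {V E : Type*} (I : V → E → Prop) : ℕ :=
  ∑ᶠ v : V, (hypDegree I v - 2)

/-!
Every vertex lies in some edge, and every edge contains a vertex of degree at least 2, since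
otherwise its star would be a whole connected component. Let `S` be the set of vertices of
degree at least 2 and `c(e)` the number of them in the edge `e`. Then `c(e) ≥ 1`, and
`c(e) ≥ 2` unless `e` is a leaf, so double counting gives `2|E| ≤ Σ_e c(e) + l = μ + 2|S| + l`.
On the other hand the handshake identity `Σ_v deg v = n₁|E|` together with
`|V| = (n₁ - 1)|E| + 1` gives `μ + |S| = Σ_v (deg v - 1) = |E| - 1`. Eliminating `|S|` leaves
`μ + 2 ≤ l`.
-/

open Finset

section incidenceGraph

variable {V E : Type*} {I : V → E → Prop} {v w : V} {e f : E}

@[simp] lemma incidenceGraph_adj_inl_inr : (incidenceGraph I).Adj (.inl v) (.inr e) ↔ I v e := by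
  simp [incidenceGraph]

@[simp] lemma incidenceGraph_adj_inr_inl : (incidenceGraph I).Adj (.inr e) (.inl v) ↔ I v e := by
  simp [incidenceGraph]

@[simp] lemma incidenceGraph_not_adj_inl_inl : ¬ (incidenceGraph I).Adj (.inl v) (.inl w) := by
  simp [incidenceGraph]

@[simp] lemma incidenceGraph_not_adj_inr_inr : ¬ (incidenceGraph I).Adj (.inr e) (.inr f) := by
  simp [incidenceGraph]

end incidenceGraph

lemma SimpleGraph.Connected.exists_adj_mem_notMem {α : Type*} {G : SimpleGraph α}
    (hG : G.Connected) {S : Set α} {a b : α} (ha : a ∈ S) (hb : b ∉ S) :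
    ∃ x ∈ S, ∃ y ∉ S, G.Adj x y := by
  obtain ⟨p⟩ := hG a b
  obtain ⟨d, -, hd⟩ := p.exists_boundary_dart S ha hb
  exact ⟨d.fst, hd.1, d.snd, hd.2, d.adj⟩

section degree

variable {V E : Type*} {I : V → E → Prop}

lemma one_le_hypDegree [Finite E] [Nonempty E] (hconn : (incidenceGraph I).Connected) (v : V) :
    1 ≤ hypDegree I v := by
  obtain ⟨e⟩ := ‹Nonempty E›
  obtain ⟨x, hx, y, -, hxy⟩ :=
    hconn.exists_adj_mem_notMem (S := {.inl v}) rfl (b := .inr e) (by simp)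
  rw [Set.mem_singleton_iff] at hx
  subst hx
  cases y with
  | inl w => simp at hxy
  | inr f => exact (Set.ncard_pos).mpr ⟨f, by simpa using hxy⟩

lemma exists_two_le_hypDegree [Finite E] [Nontrivial E] (hconn : (incidenceGraph I).Connected)
    (e : E) : ∃ v, I v e ∧ 2 ≤ hypDegree I v := by
  by_contra! hlow
  obtain ⟨e', hne⟩ := exists_ne e
  obtain ⟨x, hx, y, hy, hxy⟩ := hconn.exists_adj_mem_notMem
    (S := {x | Sum.elim (I · e) (· = e) x}) (a := .inr e) (b := .inr e') rfl hne
  cases x with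
  | inl v =>
    cases y with
    | inl w => simp at hxy
    | inr f =>
      have hdeg : hypDegree I v ≤ 1 := Nat.le_of_lt_succ (hlow v hx)
      exact hy ((Set.ncard_le_one_iff).mp hdeg (by simpa using hxy) hx)
  | inr f =>
    cases y with
    | inl w => simp_all
    | inr g => simp at hxy

end degree

section counting

variable {V E : Type*} {I : V → E → Prop}

lemma sum_ncard_incident_and_eq_sum_hypDegree [Fintype V] [Fintype E] (p : V → Prop)
    [DecidablePred p] : ∑ e, {v | I v e ∧ p v}.ncard = ∑ v with p v, hypDegree I v := by
  classical
  have := sum_card_bipartiteAbove_eq_sum_card_bipartiteBelow (s := {v | p v}) (t := univ) (r := I)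
  simp only [bipartiteAbove, bipartiteBelow, filter_filter] at this
  simp only [hypDegree, Set.ncard_eq_toFinset_card', Set.toFinset_ofPred, this, and_comm]

lemma sum_filter_two_le_eq_sum_sub_two_add {ι : Type*} [Fintype ι] (d : ι → ℕ) :
    ∑ i with 2 ≤ d i, d i = ∑ i, (d i - 2) + 2 * #{i | 2 ≤ d i} := by
  rw [sum_filter, card_filter, mul_sum, ← sum_add_distrib]
  refine sum_congr rfl fun i _ => ?_
  split_ifs <;> omega

lemma sum_eq_sum_sub_two_add_of_one_le {ι : Type*} [Fintype ι] (d : ι → ℕ)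
    (hd : ∀ i, 1 ≤ d i) : ∑ i, d i = ∑ i, (d i - 2) + #{i | 2 ≤ d i} + Fintype.card ι := by
  rw [card_filter, ← sum_add_distrib, ← card_univ, card_eq_sum_ones, ← sum_add_distrib]
  refine sum_congr rfl fun i _ => ?_
  have := hd i
  split_ifs <;> omega

lemma ncard_incident_eq_degree_one_add_two_le [Finite V] (hdeg : ∀ v, 1 ≤ hypDegree I v)
    (e : E) : {v | I v e ∧ hypDegree I v = 1}.ncard + {v | I v e ∧ 2 ≤ hypDegree I v}.ncard =
      {v | I v e}.ncard := by
  rw [← Set.ncard_union_eq]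
  · congr 1
    ext v
    simp only [Set.mem_union, Set.mem_ofPred_eq, ← and_or_left]
    exact and_iff_left (by have := hdeg v; omega)
  · rw [Set.disjoint_left]
    rintro v ⟨-, h1⟩ ⟨-, h2⟩
    omega

lemma two_mul_card_le_sum_add_ncard_leaves [Finite V] [Fintype E] {n1 : ℕ}
    (hunif : ∀ e, {v | I v e}.ncard = n1) (hdeg : ∀ v, 1 ≤ hypDegree I v)
    (hcore : ∀ e, ∃ v, I v e ∧ 2 ≤ hypDegree I v) :
    2 * Fintype.card E ≤ ∑ e, {v | I v e ∧ 2 ≤ hypDegree I v}.ncard +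
      {e | {v | I v e ∧ hypDegree I v = 1}.ncard = n1 - 1}.ncard := by
  classical
  rw [Set.ncard_eq_toFinset_card', Set.toFinset_ofPred, card_filter, ← sum_add_distrib,
    ← card_univ, mul_comm, ← smul_eq_mul, ← sum_const]
  refine sum_le_sum fun e _ => ?_
  have hsplit := ncard_incident_eq_degree_one_add_two_le hdeg e
  have hpos : 0 < {v | I v e ∧ 2 ≤ hypDegree I v}.ncard := (Set.ncard_pos).mpr (hcore e)
  rw [hunif] at hsplit
  split_ifs <;> omega

end counting

theorem hypergraph_tree_leafCount_general
    (n1 : ℕ) (V E : Type) [Finite V] [Finite E]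
    (I : V → E → Prop)
    (hconn : (incidenceGraph I).Connected)
    (hunif : ∀ e, {v | I v e}.ncard = n1)
    (htree : Nat.card V = (n1 - 1) * Nat.card E + 1)
    (hE2 : 2 ≤ Nat.card E) :
    hypMu I + 2 ≤ {e | {v | I v e ∧ hypDegree I v = 1}.ncard = n1 - 1}.ncard := by
  classical
  have := Fintype.ofFinite V
  have := Fintype.ofFinite E
  have : Nontrivial E := Finite.one_lt_card_iff_nontrivial.mp hE2
  have hdeg : ∀ v, 1 ≤ hypDegree I v := one_le_hypDegree hconn
  have hcore : ∀ e, ∃ v, I v e ∧ 2 ≤ hypDegree I v := exists_two_le_hypDegree hconn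
  have hn1_pos : 1 ≤ n1 := by
    obtain ⟨e⟩ := ‹Nontrivial E›.to_nonempty
    exact hunif e ▸ (Set.ncard_pos).mpr ((hcore e).imp fun _ => And.left)
  have hleaves := two_mul_card_le_sum_add_ncard_leaves hunif hdeg hcore
  rw [sum_ncard_incident_and_eq_sum_hypDegree, sum_filter_two_le_eq_sum_sub_two_add] at hleaves
  have hhandshake := sum_ncard_incident_and_eq_sum_hypDegree (I := I) (fun _ => True)
  simp only [and_true, hunif, sum_const, card_univ, smul_eq_mul, filter_true] at hhandshake
  rw [sum_eq_sum_sub_two_add_of_one_le _ hdeg] at hhandshake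
  rw [Nat.card_eq_fintype_card, Nat.card_eq_fintype_card, Nat.sub_one_mul, mul_comm] at htree
  have hcardE_le := Nat.le_mul_of_pos_left (Fintype.card E) hn1_pos
  rw [hypMu, finsum_eq_sum_of_fintype]
  omega

/-- **Lemma 2.1.** A tree (in the hypergraph sense: a connected `n1`-uniform hypergraph
with `(n1-1)|E|+1` vertices) with at least `2` edges has at least `μ(G) + 2` leaves,
where a leaf is an edge with exactly `n1 - 1` vertices of degree `1`. -/
theorem hypergraph_tree_leafCount
    (n1 : ℕ) (hn1 : 2 ≤ n1) (V E : Type) [Finite V] [Finite E]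
    (I : V → E → Prop)
    (hE : Nonempty E)
    (hconn : (incidenceGraph I).Connected)
    (hunif : ∀ e, {v | I v e}.ncard = n1)
    (htree : Nat.card V = (n1 - 1) * Nat.card E + 1)
    (hE2 : 2 ≤ Nat.card E) :
    hypMu I + 2 ≤ {e | {v | I v e ∧ hypDegree I v = 1}.ncard = n1 - 1}.ncard :=
  hypergraph_tree_leafCount_general n1 V E I hconn hunif htree hE2
end

section
/- Let X = K_{n_1,...,n_m} be a complete multipartite graph with maximal independent sets X_1,...,X_m, and let P be a regular partition of X. Then the group aut(P) of automorphisms of X that fix P is isomorphic, as a group, to the automorphism group of the hypergraph τ(P). -/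
/-- The complete multipartite graph `K_{n_1, …, n_m}` with maximal independent sets
`X_i` of size `n i`, on the vertex type `Σ i, Fin (n i)`. -/
def KGen (m : ℕ) (n : Fin m → ℕ) : SimpleGraph (Σ i : Fin m, Fin (n i)) :=
  SimpleGraph.comap Sigma.fst ⊤

/-- `P` is a regular partition of `K_{n_1, …, n_m}`: a partition of the vertex set each
of whose parts meets each maximal independent set in at most one vertex. -/
def IsRegularPartitionG (m : ℕ) (n : Fin m → ℕ)
    (P : Set (Set (Σ i : Fin m, Fin (n i)))) : Prop :=
  Setoid.IsPartition P ∧ ∀ p ∈ P, ∀ i : Fin m, {v | v ∈ p ∧ v.1 = i}.Subsingleton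

/-- The incidence relation of the hypergraph `τ(P)`: its vertices are the parts of `P`,
its edges are the maximal independent sets `X_1, …, X_m`, and a part is incident to
`X_i` iff they intersect (for a regular partition, iff `|X_i ∩ P_{i'}| = 1`). -/
def tauIncG (m : ℕ) (n : Fin m → ℕ) (P : Set (Set (Σ i : Fin m, Fin (n i)))) :
    ↥P → Fin m → Prop :=
  fun p i => ∃ v ∈ p.1, v.1 = i

/-- The group `aut(P)` of automorphisms of a graph `G` fixing a partition `P`,
as a subgroup of the permutation group of the vertices. -/
def autPart {V : Type*} (G : SimpleGraph V) (P : Set (Set V)) :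
    Subgroup (Equiv.Perm V) where
  carrier := {σ | (∀ a b, G.Adj (σ a) (σ b) ↔ G.Adj a b) ∧ (fun s => ⇑σ '' s) '' P = P}
  one_mem' := by
    refine ⟨fun a b => by simp, ?_⟩
    simp
  mul_mem' := by
    rintro a b ⟨ha1, ha2⟩ ⟨hb1, hb2⟩
    refine ⟨fun x y => ?_, ?_⟩
    · rw [Equiv.Perm.mul_apply, Equiv.Perm.mul_apply]
      exact (ha1 _ _).trans (hb1 x y)
    · have hfun : (fun s : Set V => ⇑(a * b) '' s)
          = (fun s : Set V => ⇑a '' s) ∘ (fun s : Set V => ⇑b '' s) := by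
        funext s
        simp only [Equiv.Perm.coe_mul, Function.comp_apply]
        rw [← Set.image_image]
      rw [hfun, Set.image_comp, hb2, ha2]
  inv_mem' := by
    rintro a ⟨ha1, ha2⟩
    refine ⟨fun x y => ?_, ?_⟩
    · have h := ha1 (a⁻¹ x) (a⁻¹ y)
      simpa using h.symm
    · have h2 := congrArg (Set.image (fun s : Set V => ⇑a⁻¹ '' s)) ha2
      rw [← Set.image_comp] at h2
      have hid : (fun s : Set V => ⇑a⁻¹ '' s) ∘ (fun s : Set V => ⇑a '' s) = id := by
        funext s
        simp [Function.comp, Set.image_image]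
      rw [hid, Set.image_id] at h2
      exact h2.symm

/-- The automorphism group of a hypergraph given by its incidence relation
`I : Vh → Eh → Prop`, as a subgroup of the product of the permutation groups of the
vertices and of the edges. -/
def autHyp {Vh Eh : Type*} (I : Vh → Eh → Prop) :
    Subgroup (Equiv.Perm Vh × Equiv.Perm Eh) where
  carrier := {στ | ∀ v e, I v e ↔ I (στ.1 v) (στ.2 e)}
  one_mem' := fun _ _ => Iff.rfl
  mul_mem' := by
    intro a b ha hb v e
    exact (hb v e).trans (ha (b.1 v) (b.2 e))
  inv_mem' := by
    intro a ha v e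
    have h := ha (a.1⁻¹ v) (a.2⁻¹ e)
    simpa using h.symm

/-!
A vertex of `K_{n_1,…,n_m}` is determined by the part of `P` containing it and by its
maximal independent set `X_i` (this is regularity), and the pairs (part, `X_i`) that occur are
exactly the incident pairs of `τ(P)`. An automorphism fixing `P` permutes the parts and, since it
preserves non-adjacency, the sets `X_i`, compatibly with incidence. Conversely, an automorphism
of `τ(P)` permutes the incident pairs, hence the vertices, and this permutation preserves both
`P` and the sets `X_i`. By regularity again, a vertex permutation is determined by the
permutations it induces on the parts and on the sets `X_i`.
-/

open Equiv Function Set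

namespace autPart

variable {V E : Type*}

instance mulActionParts {G : SimpleGraph V} {P : Set (Set V)} : MulAction (autPart G P) P where
  smul σ p := ⟨σ.1 '' p, σ.2.2.subset (mem_image_of_mem _ p.2)⟩
  one_smul _ := Subtype.ext (image_id _)
  mul_smul σ τ p := Subtype.ext (image_comp σ.1 τ.1 p.1)

variable {f : V → E} {P : Set (Set V)}

theorem apply_eq_apply_iff (σ : autPart ((⊤ : SimpleGraph E).comap f) P) (a b : V) :
    f (σ.1 a) = f (σ.1 b) ↔ f a = f b := by
  simpa using (σ.2.1 a b).not

noncomputable def fiberPerm (hf : Surjective f) (σ : autPart ((⊤ : SimpleGraph E).comap f) P) :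
    Perm E :=
  (Setoid.quotientKerEquivOfSurjective f hf).permCongr
    (Quotient.congr σ.1 fun a b => (apply_eq_apply_iff σ a b).symm)

theorem fiberPerm_apply_apply (hf : Surjective f) (σ : autPart ((⊤ : SimpleGraph E).comap f) P)
    (v : V) : fiberPerm hf σ (f v) = f (σ.1 v) := by
  have : (Setoid.quotientKerEquivOfSurjective f hf).symm (f v) = ⟦v⟧ :=
    (Equiv.symm_apply_eq _).2 rfl
  simp only [fiberPerm, permCongr_apply, this, Quotient.congr_mk]
  rfl

variable (P) in
noncomputable def fiberPermHom (hf : Surjective f) :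
    autPart ((⊤ : SimpleGraph E).comap f) P →* Perm E where
  toFun := fiberPerm hf
  map_one' := Equiv.ext <| hf.forall.2 fun v => by simp [fiberPerm_apply_apply]
  map_mul' σ τ := Equiv.ext <| hf.forall.2 fun v => by simp [fiberPerm_apply_apply]

end autPart

variable {V E : Type*} {f : V → E} {P : Set (Set V)}

/-- The hypergraph `τ(P)` of the complete multipartite graph `(⊤ : SimpleGraph E).comap f`, whose
maximal independent sets are the fibres of `f`; `tauIncG m n P` is `partInc Sigma.fst P`. -/
def partInc (f : V → E) (P : Set (Set V)) (p : P) (e : E) : Prop := ∃ v ∈ p.1, f v = e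

def Induces (f : V → E) (P : Set (Set V)) (σ : Perm V) (π : Perm P) (ρ : Perm E) : Prop :=
  (∀ p : P, σ '' p = π p) ∧ ∀ v, f (σ v) = ρ (f v)

namespace Induces

variable {σ : Perm V} {π : Perm P} {ρ : Perm E}

theorem mem_autPart (h : Induces f P σ π ρ) :
    σ ∈ autPart ((⊤ : SimpleGraph E).comap f) P := by
  refine ⟨fun a b => by simp [h.2], ?_⟩
  calc (fun s => σ '' s) '' P = range fun p : P => σ '' p := image_eq_range _ _
    _ = range (Subtype.val ∘ π) := congrArg range (funext h.1)
    _ = P := by rw [π.surjective.range_comp, Subtype.range_coe]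

theorem mem_autHyp (h : Induces f P σ π ρ) : (π, ρ) ∈ autHyp (partInc f P) := by
  intro p e
  simp only [partInc, ← h.1 p, exists_mem_image, h.2, ρ.apply_eq_iff_eq]

theorem unique (hP : ⋃₀ P = univ) (hinj : ∀ p ∈ P, InjOn f p) {τ : Perm V}
    (hσ : Induces f P σ π ρ) (hτ : Induces f P τ π ρ) : σ = τ := by
  ext v
  obtain ⟨p, hp, hv⟩ := sUnion_eq_univ_iff.1 hP v
  have hσv : σ v ∈ (π ⟨p, hp⟩ : Set V) := hσ.1 ⟨p, hp⟩ ▸ mem_image_of_mem σ hv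
  have hτv : τ v ∈ (π ⟨p, hp⟩ : Set V) := hτ.1 ⟨p, hp⟩ ▸ mem_image_of_mem τ hv
  exact hinj _ (π _).2 hσv hτv (by rw [hσ.2, hτ.2])

end Induces

section

variable (hf : Surjective f)

variable (P) in
noncomputable def partFiberHom :
    autPart ((⊤ : SimpleGraph E).comap f) P →* autHyp (partInc f P) :=
  ((MulAction.toPermHom _ P).prod (autPart.fiberPermHom P hf)).codRestrict _ fun σ =>
    Induces.mem_autHyp (σ := σ.1)
      ⟨fun _ => rfl, fun v => (autPart.fiberPerm_apply_apply hf σ v).symm⟩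

theorem induces_iff_partFiberHom_eq (σ : autPart ((⊤ : SimpleGraph E).comap f) P)
    {π : Perm P} {ρ : Perm E} :
    Induces f P σ.1 π ρ ↔ (partFiberHom P hf σ : Perm P × Perm E) = (π, ρ) := by
  refine ⟨fun h => Prod.ext ?_ ?_, fun h => ?_⟩
  · exact Equiv.ext fun p => Subtype.ext (h.1 p)
  · exact Equiv.ext <| hf.forall.2 fun v => (autPart.fiberPerm_apply_apply hf σ v).trans (h.2 v)
  · obtain ⟨rfl, rfl⟩ := Prod.ext_iff.1 h
    exact ⟨fun _ => rfl, fun v => (autPart.fiberPerm_apply_apply hf σ v).symm⟩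

end

noncomputable def Setoid.IsPartition.indexedPartition (hP : Setoid.IsPartition P) :
    IndexedPartition (Subtype.val : P → Set V) :=
  .mk' _ (fun p q hpq => hP.pairwiseDisjoint p.2 q.2 (Subtype.coe_injective.ne hpq))
    (fun p => Setoid.nonempty_of_mem_partition hP p.2)
    (fun v => let ⟨p, ⟨hp, hv⟩, _⟩ := hP.2 v; ⟨⟨p, hp⟩, hv⟩)

noncomputable def flagEquiv (hP : Setoid.IsPartition P) (hinj : ∀ p ∈ P, InjOn f p) :
    V ≃ {x : P × E // partInc f P x.1 x.2} :=
  Equiv.ofBijective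
    (fun v => ⟨(hP.indexedPartition.index v, f v), v, hP.indexedPartition.mem_index v, rfl⟩)
    ⟨fun a b hab => by
      obtain ⟨hidx, hfab⟩ := Prod.mk.inj (Subtype.mk.inj hab)
      exact hinj _ (hP.indexedPartition.index a).2 (hP.indexedPartition.mem_index a)
        (hidx ▸ hP.indexedPartition.mem_index b) hfab,
    fun ⟨(p, e), v, hv, hve⟩ => ⟨v, by
      simp [(hP.indexedPartition.mem_iff_index_eq).1 hv, hve]⟩⟩

theorem exists_induces_of_mem_autHyp (hP : Setoid.IsPartition P) (hinj : ∀ p ∈ P, InjOn f p)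
    {π : Perm P} {ρ : Perm E} (h : (π, ρ) ∈ autHyp (partInc f P)) :
    ∃ σ : Perm V, Induces f P σ π ρ := by
  set I := hP.indexedPartition
  set Φ := flagEquiv hP hinj
  let σ : Perm V :=
    Φ.symm.permCongr (Perm.subtypePerm (π.prodCongr ρ) fun x => (h x.1 x.2).symm)
  have hΦσ (v : V) : (Φ (σ v)).1 = (π (I.index v), ρ (f v)) := by
    simp only [σ, permCongr_apply, symm_symm, apply_symm_apply]
    rfl
  have hindex (v : V) : I.index (σ v) = π (I.index v) := congrArg Prod.fst (hΦσ v)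
  refine ⟨σ, fun p => ?_, fun v => congrArg Prod.snd (hΦσ v)⟩
  ext w
  rw [mem_image_equiv, I.mem_iff_index_eq, I.mem_iff_index_eq, ← π.apply_eq_iff_eq, ← hindex,
    apply_symm_apply]

theorem partFiberHom_bijective (hf : Surjective f) (hP : Setoid.IsPartition P)
    (hinj : ∀ p ∈ P, InjOn f p) : Bijective (partFiberHom P hf) := by
  refine ⟨fun σ τ hστ => Subtype.ext ?_, fun g => ?_⟩
  · exact ((induces_iff_partFiberHom_eq hf σ).2 rfl).unique hP.sUnion_eq_univ hinj
      ((induces_iff_partFiberHom_eq hf τ).2 (congrArg Subtype.val hστ.symm))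
  · obtain ⟨σ, hσ⟩ := exists_induces_of_mem_autHyp hP hinj g.2
    exact ⟨⟨σ, hσ.mem_autPart⟩, Subtype.ext ((induces_iff_partFiberHom_eq hf _).1 hσ)⟩

theorem autPart_iso_autHyp_general
    (m : ℕ) (n : Fin m → ℕ) (hn : ∀ i, 1 ≤ n i)
    (P : Set (Set (Σ i : Fin m, Fin (n i))))
    (hreg : IsRegularPartitionG m n P) :
    Nonempty (autPart (KGen m n) P ≃* autHyp (tauIncG m n P)) := by
  have hf : Surjective (Sigma.fst : (Σ i : Fin m, Fin (n i)) → Fin m) :=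
    fun i => ⟨⟨i, 0, hn i⟩, rfl⟩
  have hinj : ∀ p ∈ P, InjOn Sigma.fst p := fun p hp a ha b hb hab =>
    hreg.2 p hp b.1 ⟨ha, hab⟩ ⟨hb, rfl⟩
  exact ⟨.ofBijective _ (partFiberHom_bijective hf hreg.1 hinj)⟩

/-- **Lemma 3.2.** For a regular partition `P` of a complete multipartite graph, the
group `aut(P)` is isomorphic to the automorphism group of the hypergraph `τ(P)`. -/
theorem autPart_iso_autHyp
    (m : ℕ) (hm : 1 ≤ m) (n : Fin m → ℕ) (hn : ∀ i, 1 ≤ n i)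
    (P : Set (Set (Σ i : Fin m, Fin (n i))))
    (hreg : IsRegularPartitionG m n P) :
    Nonempty (autPart (KGen m n) P ≃* autHyp (tauIncG m n P)) :=
  autPart_iso_autHyp_general m n hn P hreg
end

section
/- Let m ≥ 1 and n_1,...,n_m ≥ 1. The complete multipartite graph K_{n_1,...,n_m} has a distinguishing partition if and only if there exists an asymmetric hypergraph with m edges e_1,...,e_m such that edge e_i is incident to exactly n_i vertices for each i. -/
/-- `P` is a distinguishing partition of the graph `G`. -/
def IsDistinguishingPartition {V : Type*} (G : SimpleGraph V) (P : Set (Set V)) : Prop :=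
  Setoid.IsPartition P ∧
    ∀ φ : G ≃g G, (fun s => ⇑φ '' s) '' P = P → ∀ v, φ v = v

/-- `G` has a distinguishing partition. -/
def HasDistinguishingPartition {V : Type*} (G : SimpleGraph V) : Prop :=
  ∃ P, IsDistinguishingPartition G P

/-- A hypergraph, given by its incidence relation, is asymmetric: its only
automorphism (pair of permutations of vertices and edges preserving incidence)
is the identity. -/
def HypAsymmetric {Vh Eh : Type*} (I : Vh → Eh → Prop) : Prop :=
  ∀ (σ : Equiv.Perm Vh) (τ : Equiv.Perm Eh),
    (∀ v e, I v e ↔ I (σ v) (τ e)) → σ = 1 ∧ τ = 1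


namespace KGenProofAux

lemma kgen_fst_iff {m : ℕ} {n : Fin m → ℕ} (φ : KGen m n ≃g KGen m n)
    (u w : Σ i : Fin m, Fin (n i)) : (φ u).1 = (φ w).1 ↔ u.1 = w.1 := by
  have h := φ.map_rel_iff (a := u) (b := w)
  simp only [KGen, SimpleGraph.comap_adj, SimpleGraph.top_adj] at h
  exact not_iff_not.mp h


lemma forward {m : ℕ} (n : Fin m → ℕ) (hn : ∀ i, 1 ≤ n i)
    (h : HasDistinguishingPartition (KGen m n)) :
    ∃ (N : ℕ) (I : Fin N → Fin m → Prop),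
      (∀ i, {v | I v i}.ncard = n i) ∧ HypAsymmetric I := by
  classical
  obtain ⟨P, ⟨hne, hcov⟩, hdist⟩ := h
  have hcls0 : ∀ u : (Σ i : Fin m, Fin (n i)), (hcov u).choose ∈ P ∧ u ∈ (hcov u).choose :=
    fun u => (hcov u).choose_spec.1
  let cls : (Σ i : Fin m, Fin (n i)) → ↥P := fun u => ⟨(hcov u).choose, (hcls0 u).1⟩
  have hclsmem : ∀ u, u ∈ (cls u : Set (Σ i : Fin m, Fin (n i))) := fun u => (hcls0 u).2
  have hclseq : ∀ (u : Σ i : Fin m, Fin (n i)) (q : Set (Σ i : Fin m, Fin (n i))),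
      q ∈ P → u ∈ q → (cls u : Set (Σ i : Fin m, Fin (n i))) = q :=
    fun u q hq hu => ((hcov u).choose_spec.2 q ⟨hq, hu⟩).symm
  -- transversality
  have htrans : ∀ p ∈ P, ∀ (i : Fin m) (x y : Fin (n i)),
      (⟨i, x⟩ : Σ i : Fin m, Fin (n i)) ∈ p → (⟨i, y⟩ : Σ i : Fin m, Fin (n i)) ∈ p → x = y := by
    intro p hp i x y hx hy
    by_contra hxy
    have hab : (⟨i, x⟩ : Σ i : Fin m, Fin (n i)) ≠ ⟨i, y⟩ := by
      simp only [ne_eq, Sigma.mk.inj_iff, heq_eq_eq, true_and]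
      exact hxy
    set a : (Σ i : Fin m, Fin (n i)) := ⟨i, x⟩ with ha
    set b : (Σ i : Fin m, Fin (n i)) := ⟨i, y⟩ with hb
    have hfst : ∀ u : (Σ i : Fin m, Fin (n i)), ((Equiv.swap a b) u).1 = u.1 := by
      intro u
      rcases eq_or_ne u a with h' | hua
      · rw [h', Equiv.swap_apply_left, ha, hb]
      rcases eq_or_ne u b with h' | hub
      · rw [h', Equiv.swap_apply_right, ha, hb]
      · rw [Equiv.swap_apply_of_ne_of_ne hua hub]
    let φ : KGen m n ≃g KGen m n :=
      ⟨Equiv.swap a b, by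
        intro u w
        simp only [KGen, SimpleGraph.comap_adj, SimpleGraph.top_adj, hfst]⟩
    have hφ : ∀ u, φ u = Equiv.swap a b u := fun _ => rfl
    have hfix : ∀ q ∈ P, ⇑φ '' q = q := by
      intro q hq
      have hstep : ∀ u ∈ q, φ u ∈ q := by
        intro u hu
        rcases eq_or_ne u a with h' | hua
        · have hqp : q = p := by
            rw [← hclseq u q hq hu, hclseq u p hp (h' ▸ hx)]
          rw [hφ, h', Equiv.swap_apply_left, hqp]; exact hy
        rcases eq_or_ne u b with h' | hub
        · have hqp : q = p := by
            rw [← hclseq u q hq hu, hclseq u p hp (h' ▸ hy)]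
          rw [hφ, h', Equiv.swap_apply_right, hqp]; exact hx
        · rw [hφ, Equiv.swap_apply_of_ne_of_ne hua hub]; exact hu
      apply Set.Subset.antisymm
      · rintro _ ⟨u, hu, rfl⟩; exact hstep u hu
      · intro u hu
        refine ⟨Equiv.swap a b u, ?_, ?_⟩
        · have h2 := hstep _ hu
          rwa [hφ] at h2
        · rw [hφ, Equiv.swap_apply_self]
    have himg : (fun s => ⇑φ '' s) '' P = P := by
      calc (fun s => ⇑φ '' s) '' P = id '' P := Set.image_congr fun q hq => hfix q hq
        _ = P := Set.image_id P
    have h3 := hdist φ himg a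
    rw [hφ, Equiv.swap_apply_left] at h3
    exact hab (ha ▸ hb ▸ h3.symm)
  -- finiteness of P
  have hPfin : P.Finite := Set.toFinite P
  haveI : Finite ↥P := hPfin.to_subtype
  refine ⟨Nat.card ↥P, ?_⟩
  let e : Fin (Nat.card ↥P) ≃ ↥P := (Finite.equivFinOfCardEq rfl).symm
  refine ⟨fun v i => ∃ x : Fin (n i),
      (⟨i, x⟩ : Σ i : Fin m, Fin (n i)) ∈ (e v : Set (Σ i : Fin m, Fin (n i))), ?_, ?_⟩
  · -- sizes
    intro i
    have hrange : {v | ∃ x : Fin (n i),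
        (⟨i, x⟩ : Σ i : Fin m, Fin (n i)) ∈ (e v : Set (Σ i : Fin m, Fin (n i)))} =
        Set.range (fun x : Fin (n i) => e.symm (cls ⟨i, x⟩)) := by
      ext v
      constructor
      · rintro ⟨x, hx⟩
        refine ⟨x, ?_⟩
        have hcv : cls (⟨i, x⟩ : Σ i : Fin m, Fin (n i)) = e v :=
          Subtype.ext (hclseq _ _ (e v).2 hx)
        show e.symm (cls ⟨i, x⟩) = v
        rw [hcv, Equiv.symm_apply_apply]
      · rintro ⟨x, rfl⟩
        exact ⟨x, by
          show (⟨i, x⟩ : Σ i : Fin m, Fin (n i)) ∈ (e (e.symm (cls ⟨i, x⟩)) : Set _)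
          rw [Equiv.apply_symm_apply]; exact hclsmem _⟩
    have hinj : Function.Injective (fun x : Fin (n i) => e.symm (cls ⟨i, x⟩)) := by
      intro x y hxy
      simp only at hxy
      have h2 : cls (⟨i, x⟩ : Σ i : Fin m, Fin (n i)) = cls ⟨i, y⟩ := e.symm.injective hxy
      have h3 : (cls (⟨i, x⟩ : Σ i : Fin m, Fin (n i)) : Set (Σ i : Fin m, Fin (n i))) =
          (cls (⟨i, y⟩ : Σ i : Fin m, Fin (n i)) : Set (Σ i : Fin m, Fin (n i))) :=
        Subtype.ext_iff.mp h2
      exact htrans _ (cls (⟨i, x⟩ : Σ i : Fin m, Fin (n i))).2 i x y (hclsmem _)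
        (h3 ▸ hclsmem (⟨i, y⟩ : Σ i : Fin m, Fin (n i)))
    rw [hrange, ← Set.image_univ, Set.ncard_image_of_injective _ hinj, Set.ncard_univ,
      Nat.card_eq_fintype_card, Fintype.card_fin]
  · -- asymmetry
    intro σ τ hστ
    have key : ∀ u : (Σ i : Fin m, Fin (n i)), ∃ w : (Σ i : Fin m, Fin (n i)),
        w.1 = τ u.1 ∧ w ∈ (e (σ (e.symm (cls u))) : Set (Σ i : Fin m, Fin (n i))) := by
      intro u
      have hu : u ∈ (e (e.symm (cls u)) : Set (Σ i : Fin m, Fin (n i))) := by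
        rw [Equiv.apply_symm_apply]; exact hclsmem u
      have hI : ∃ x : Fin (n u.1), (⟨u.1, x⟩ : Σ i : Fin m, Fin (n i)) ∈
          (e (e.symm (cls u)) : Set (Σ i : Fin m, Fin (n i))) :=
        ⟨u.2, by rw [Sigma.eta]; exact hu⟩
      obtain ⟨y, hy⟩ := (hστ (e.symm (cls u)) u.1).mp hI
      exact ⟨⟨τ u.1, y⟩, rfl, hy⟩
    let γ0 : (Σ i : Fin m, Fin (n i)) → (Σ i : Fin m, Fin (n i)) := fun u => (key u).choose
    have hγfst : ∀ u, (γ0 u).1 = τ u.1 := fun u => (key u).choose_spec.1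
    have hγmem : ∀ u, γ0 u ∈ (e (σ (e.symm (cls u))) : Set (Σ i : Fin m, Fin (n i))) :=
      fun u => (key u).choose_spec.2
    have hγinj : Function.Injective γ0 := by
      intro u u' huu
      have h1 : γ0 u ∈ (e (σ (e.symm (cls u'))) : Set (Σ i : Fin m, Fin (n i))) :=
        huu ▸ hγmem u'
      have h2 : (e (σ (e.symm (cls u))) : Set (Σ i : Fin m, Fin (n i))) =
          (e (σ (e.symm (cls u'))) : Set (Σ i : Fin m, Fin (n i))) :=
        (hclseq (γ0 u) _ (e (σ (e.symm (cls u)))).2 (hγmem u)).symm.trans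
          (hclseq (γ0 u) _ (e (σ (e.symm (cls u')))).2 h1)
      have hcl : cls u = cls u' :=
        e.symm.injective (σ.injective (e.injective (Subtype.ext h2)))
      have hfst : u.1 = u'.1 := τ.injective (by rw [← hγfst, ← hγfst, huu])
      have hclset : (cls u : Set (Σ i : Fin m, Fin (n i))) = cls u' := Subtype.ext_iff.mp hcl
      obtain ⟨i, xx⟩ := u
      obtain ⟨i', xx'⟩ := u'
      simp only at hfst
      subst hfst
      have hxy := htrans _ (cls (⟨i, xx⟩ : Σ i : Fin m, Fin (n i))).2 i xx xx' (hclsmem _)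
        (hclset ▸ hclsmem (⟨i, xx'⟩ : Σ i : Fin m, Fin (n i)))
      rw [hxy]
    have hγbij : Function.Bijective γ0 := hγinj.bijective_of_finite
    let γ : KGen m n ≃g KGen m n :=
      ⟨Equiv.ofBijective γ0 hγbij, by
        intro u w
        simp only [KGen, SimpleGraph.comap_adj, SimpleGraph.top_adj,
          Equiv.ofBijective_apply, hγfst, ne_eq, τ.injective.eq_iff]⟩
    have hγ : ∀ u, γ u = γ0 u := fun _ => rfl
    have hcl : ∀ v, ⇑γ '' (e v : Set (Σ i : Fin m, Fin (n i))) =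
        (e (σ v) : Set (Σ i : Fin m, Fin (n i))) := by
      intro v
      apply Set.Subset.antisymm
      · rintro _ ⟨u, hu, rfl⟩
        rw [hγ]
        have hcv : cls u = e v := Subtype.ext (hclseq _ _ (e v).2 hu)
        have h2 := hγmem u
        rwa [hcv, Equiv.symm_apply_apply] at h2
      · intro w hw
        obtain ⟨u, rfl⟩ := hγbij.2 w
        have h2 : (e (σ (e.symm (cls u))) : Set (Σ i : Fin m, Fin (n i))) =
            (e (σ v) : Set (Σ i : Fin m, Fin (n i))) :=
          (hclseq (γ0 u) _ (e (σ (e.symm (cls u)))).2 (hγmem u)).symm.trans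
            (hclseq (γ0 u) _ (e (σ v)).2 hw)
        have hv : e.symm (cls u) = v := σ.injective (e.injective (Subtype.ext h2))
        refine ⟨u, ?_, (hγ u).symm⟩
        have hcv : cls u = e v := by rw [← hv, Equiv.apply_symm_apply]
        have := hclsmem u
        rwa [Subtype.ext_iff.mp hcv] at this
    have hmemP : ∀ s, s ∈ P ↔ ∃ v, (e v : Set (Σ i : Fin m, Fin (n i))) = s := by
      intro s
      constructor
      · intro hs; exact ⟨e.symm ⟨s, hs⟩, by rw [Equiv.apply_symm_apply]⟩
      · rintro ⟨v, rfl⟩; exact (e v).2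
    have himg : (fun s => ⇑γ '' s) '' P = P := by
      ext s
      simp only [Set.mem_image]
      constructor
      · rintro ⟨q, hq, rfl⟩
        obtain ⟨v, rfl⟩ := (hmemP q).1 hq
        rw [hcl v]; exact (e (σ v)).2
      · intro hs
        obtain ⟨v, rfl⟩ := (hmemP _).1 hs
        exact ⟨(e (σ.symm v) : Set (Σ i : Fin m, Fin (n i))), (e _).2,
          by rw [hcl, Equiv.apply_symm_apply]⟩
    have hfixall := hdist γ himg
    refine ⟨Equiv.ext fun v => ?_, Equiv.ext fun i => ?_⟩
    · show σ v = v
      have hnonempty : (e v : Set (Σ i : Fin m, Fin (n i))).Nonempty := by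
        rcases Set.eq_empty_or_nonempty (e v : Set (Σ i : Fin m, Fin (n i))) with hemp | hne'
        · exact absurd (hemp ▸ (e v).2) hne
        · exact hne'
      obtain ⟨u, hu⟩ := hnonempty
      have hcu : cls u = e v := Subtype.ext (hclseq _ _ (e v).2 hu)
      have h1 : γ0 u = u := hfixall u
      have h2 : u ∈ (e (σ v) : Set (Σ i : Fin m, Fin (n i))) := by
        have h3 := hγmem u
        rwa [hcu, Equiv.symm_apply_apply, h1] at h3
      have h4 : (e (σ v) : Set (Σ i : Fin m, Fin (n i))) = e v :=
        (hclseq u _ (e (σ v)).2 h2).symm.trans (hclseq u _ (e v).2 hu)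
      exact e.injective (Subtype.ext h4)
    · show τ i = i
      have h1 : γ0 ⟨i, ⟨0, hn i⟩⟩ = ⟨i, ⟨0, hn i⟩⟩ := hfixall ⟨i, ⟨0, hn i⟩⟩
      have h2 := hγfst (⟨i, ⟨0, hn i⟩⟩ : Σ i : Fin m, Fin (n i))
      rw [h1] at h2
      exact h2.symm

lemma backward {m : ℕ} (n : Fin m → ℕ) (hn : ∀ i, 1 ≤ n i)
    (h : ∃ (N : ℕ) (I : Fin N → Fin m → Prop),
      (∀ i, {v | I v i}.ncard = n i) ∧ HypAsymmetric I) :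
    HasDistinguishingPartition (KGen m n) := by
  classical
  obtain ⟨N, I, hsize, hasym⟩ := h
  have β : ∀ i : Fin m, ↥{v | I v i} ≃ Fin (n i) := fun i =>
    Finite.equivFinOfCardEq (by rw [Nat.card_coe_set_eq]; exact hsize i)
  let cls : (Σ i : Fin m, Fin (n i)) → Fin N := fun u => ((β u.1).symm u.2 : ↥{v | I v u.1})
  have hI : ∀ u : (Σ i : Fin m, Fin (n i)), I (cls u) u.1 := fun u => ((β u.1).symm u.2).2
  have hclsinj : ∀ (i : Fin m) (x y : Fin (n i)),
      cls ⟨i, x⟩ = cls ⟨i, y⟩ → x = y := by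
    intro i x y hxy
    have h2 : (β i).symm x = (β i).symm y := Subtype.ext hxy
    exact (β i).symm.injective h2
  have hIiff : ∀ (v : Fin N) (i : Fin m), I v i ↔ ∃ x : Fin (n i),
      cls (⟨i, x⟩ : Σ i : Fin m, Fin (n i)) = v := by
    intro v i
    constructor
    · intro hv
      refine ⟨β i ⟨v, hv⟩, ?_⟩
      show (((β i).symm (β i ⟨v, hv⟩) : ↥{v | I v i}) : Fin N) = v
      rw [Equiv.symm_apply_apply]
    · rintro ⟨x, rfl⟩
      exact hI ⟨i, x⟩
  refine ⟨{s | ∃ v ∈ Set.range cls, s = cls ⁻¹' {v}}, ⟨⟨?_, ?_⟩, ?_⟩⟩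
  · -- ∅ ∉ P
    rintro ⟨v, ⟨u, rfl⟩, hs⟩
    have : u ∈ cls ⁻¹' {cls u} := rfl
    rw [← hs] at this
    exact this
  · -- cover
    intro u
    refine ⟨cls ⁻¹' {cls u}, ⟨⟨cls u, ⟨u, rfl⟩, rfl⟩, rfl⟩, ?_⟩
    rintro q ⟨⟨v, hv, rfl⟩, hu⟩
    have : cls u = v := hu
    rw [← this]
  · -- distinguishing
    intro φ himg
    have hfstiff := kgen_fst_iff φ
    let τ0 : Fin m → Fin m := fun i => (φ ⟨i, ⟨0, hn i⟩⟩).1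
    have hτ : ∀ u : (Σ i : Fin m, Fin (n i)), (φ u).1 = τ0 u.1 := by
      intro u
      show (φ u).1 = (φ ⟨u.1, ⟨0, hn u.1⟩⟩).1
      rw [hfstiff]
    have hτinj : Function.Injective τ0 := by
      intro i j hij
      have h2 : (φ (⟨i, ⟨0, hn i⟩⟩ : Σ i : Fin m, Fin (n i))).1 =
          (φ (⟨j, ⟨0, hn j⟩⟩ : Σ i : Fin m, Fin (n i))).1 := hij
      exact (hfstiff _ _).mp h2
    -- the induced map on hypergraph vertices
    have hmap : ∀ v, v ∈ Set.range cls → ∃ v', v' ∈ Set.range cls ∧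
        ⇑φ '' (cls ⁻¹' {v}) = cls ⁻¹' {v'} := by
      intro v hv
      have hmem : ⇑φ '' (cls ⁻¹' {v}) ∈ {s | ∃ v ∈ Set.range cls, s = cls ⁻¹' {v}} := by
        rw [← himg]
        exact Set.mem_image_of_mem _ ⟨v, hv, rfl⟩
      obtain ⟨v', hv', hs⟩ := hmem
      exact ⟨v', hv', hs⟩
    choose g hg1 hg2 using hmap
    let σ0 : Fin N → Fin N := fun v =>
      if h : v ∈ Set.range cls then g v h else v
    have hσ0range : ∀ v (hv : v ∈ Set.range cls), σ0 v = g v hv := by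
      intro v hv; simp only [σ0, dif_pos hv]
    have hσ0nr : ∀ v, v ∉ Set.range cls → σ0 v = v := by
      intro v hv; simp only [σ0, dif_neg hv]
    have hσ : ∀ u : (Σ i : Fin m, Fin (n i)), cls (φ u) = σ0 (cls u) := by
      intro u
      have hv : cls u ∈ Set.range cls := ⟨u, rfl⟩
      rw [hσ0range _ hv]
      have h2 : φ u ∈ ⇑φ '' (cls ⁻¹' {cls u}) := Set.mem_image_of_mem _ rfl
      rw [hg2 (cls u) hv] at h2
      exact h2
    have hσ0inrange : ∀ v (hv : v ∈ Set.range cls), σ0 v ∈ Set.range cls := by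
      intro v hv; rw [hσ0range _ hv]; exact hg1 v hv
    have hσ0inj : Function.Injective σ0 := by
      intro v w hvw
      by_cases hv : v ∈ Set.range cls
      · by_cases hw : w ∈ Set.range cls
        · rw [hσ0range _ hv, hσ0range _ hw] at hvw
          have h2 : ⇑φ '' (cls ⁻¹' {v}) = ⇑φ '' (cls ⁻¹' {w}) := by
            rw [hg2 v hv, hg2 w hw, hvw]
          have h3 : cls ⁻¹' {v} = cls ⁻¹' {w} :=
            Set.image_injective.mpr φ.injective h2
          obtain ⟨u, rfl⟩ := hv
          have h4 : u ∈ cls ⁻¹' {w} := h3 ▸ rfl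
          exact h4
        · exact absurd (hvw ▸ hσ0inrange v hv) (by rw [hσ0nr _ hw]; exact hw)
      · by_cases hw : w ∈ Set.range cls
        · exact absurd (hvw ▸ hσ0inrange w hw) (by rw [hσ0nr _ hv]; exact hv)
        · rw [hσ0nr _ hv, hσ0nr _ hw] at hvw; exact hvw
    have hIr : ∀ v i, I v i → v ∈ Set.range cls := by
      intro v i hvi
      obtain ⟨x, hx⟩ := (hIiff v i).mp hvi
      exact ⟨⟨i, x⟩, hx⟩
    -- incidence preservation
    have hpres : ∀ v i, I v i ↔ I (σ0 v) (τ0 i) := by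
      intro v i
      constructor
      · intro hvi
        obtain ⟨x, hx⟩ := (hIiff v i).mp hvi
        have h2 := hI (φ ⟨i, x⟩)
        rw [hσ, hx, hτ] at h2
        exact h2
      · intro hvi
        have hσvr : σ0 v ∈ Set.range cls := hIr _ _ hvi
        have hvr : v ∈ Set.range cls := by
          by_contra hv
          rw [hσ0nr _ hv] at hσvr
          exact hv hσvr
        obtain ⟨y, hy⟩ := (hIiff (σ0 v) (τ0 i)).mp hvi
        set u := φ.symm ⟨τ0 i, y⟩ with hu
        have hφu : φ u = ⟨τ0 i, y⟩ := by rw [hu]; exact φ.apply_symm_apply _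
        have hufst : u.1 = i := by
          apply hτinj
          rw [← hτ u, hφu]
        have hclsu : cls u = v := by
          apply hσ0inj
          rw [← hσ u, hφu, hy]
        have h2 := hI u
        rw [hclsu, hufst] at h2
        exact h2
    have hτbij : Function.Bijective τ0 := hτinj.bijective_of_finite
    have hσbij : Function.Bijective σ0 := hσ0inj.bijective_of_finite
    have hpres' : ∀ v i, I v i ↔ I ((Equiv.ofBijective σ0 hσbij) v)
        ((Equiv.ofBijective τ0 hτbij) i) := by
      intro v i
      rw [Equiv.ofBijective_apply, Equiv.ofBijective_apply]
      exact hpres v i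
    obtain ⟨hσ1, hτ1⟩ := hasym (Equiv.ofBijective σ0 hσbij) (Equiv.ofBijective τ0 hτbij) hpres'
    have hσid : ∀ v, σ0 v = v := fun v => Equiv.ext_iff.mp hσ1 v
    have hτid : ∀ i, τ0 i = i := fun i => Equiv.ext_iff.mp hτ1 i
    -- conclude φ = id
    intro u
    obtain ⟨i, x⟩ := u
    have hfst : (φ ⟨i, x⟩).1 = i := by rw [hτ]; exact hτid i
    rcases hh : φ ⟨i, x⟩ with ⟨j, y⟩
    have hj : j = i := by rw [hh] at hfst; exact hfst
    subst hj
    have hc : cls (φ ⟨j, x⟩) = cls ⟨j, x⟩ := by rw [hσ]; exact hσid _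
    rw [hh] at hc
    have hxy : y = x := hclsinj j y x hc
    rw [hxy]

end KGenProofAux

/-- **Corollary 3.3.** `K_{n_1, …, n_m}` has a distinguishing partition iff there exists
an asymmetric hypergraph with `m` edges of sizes `n_1, …, n_m`. -/
theorem hasDistinguishingPartition_iff_asymmetric_hypergraph
    (m : ℕ) (hm : 1 ≤ m) (n : Fin m → ℕ) (hn : ∀ i, 1 ≤ n i) :
    HasDistinguishingPartition (KGen m n) ↔
      ∃ (N : ℕ) (I : Fin N → Fin m → Prop),
        (∀ i, {v | I v i}.ncard = n i) ∧ HypAsymmetric I := by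
  exact ⟨fun h => KGenProofAux.forward n hn h, fun h => KGenProofAux.backward n hn h⟩
end

section
/- Let P be a regular partition of K_{m_1(n_1),m_2(n_2)} such that τ(P) is asymmetric, and let S be the set of degree-1 vertices of some edge of τ'(P). Then |S| ≤ 2^{m_2}, and, writing |S| = Σ_{i=0}^{j'} C(m_2,i) + k' with j' ≥ -1 and either 0 ≤ k' < C(m_2,j'+1), or k' = 0 and j' = m_2, one has w(S) ≤ Σ_{i=0}^{j'} (m_2-i)·C(m_2,i) + k'·(m_2-j'-1). -/
/-- Vertex type of the complete multipartite graph with `m1` parts of size `n1`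
and `m2` parts of size `n2`.  The parts of size `n2` are indexed by `Fin m2`
(these play the role of `X_1, …, X_{m2}` in the paper). -/
abbrev MPV (m1 n1 m2 n2 : ℕ) : Type :=
  (Fin m1 × Fin n1) ⊕ (Fin m2 × Fin n2)

/-- The part (maximal independent set) containing a vertex. -/
def partOf {m1 n1 m2 n2 : ℕ} (v : MPV m1 n1 m2 n2) : Fin m1 ⊕ Fin m2 :=
  Sum.map Prod.fst Prod.fst v

/-- The complete multipartite graph `K_{m1(n1), m2(n2)}`. -/
def KMP (m1 n1 m2 n2 : ℕ) : SimpleGraph (MPV m1 n1 m2 n2) :=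
  SimpleGraph.comap partOf ⊤

/-- `P` is a regular partition: a partition of the vertex set each of whose parts
meets each maximal independent set in at most one vertex. -/
def IsRegularPartition {m1 n1 m2 n2 : ℕ} (P : Set (Set (MPV m1 n1 m2 n2))) : Prop :=
  Setoid.IsPartition P ∧
    ∀ p ∈ P, ∀ i : Fin m1 ⊕ Fin m2, {v | v ∈ p ∧ partOf v = i}.Subsingleton

/-- The incidence relation of the hypergraph `τ(P)`: its vertices are the parts of `P`,
its edges are the maximal independent sets, and a part is incident to a maximal
independent set iff they intersect (for a regular partition, iff they intersect in
exactly one vertex). -/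
def tauInc {m1 n1 m2 n2 : ℕ} (P : Set (Set (MPV m1 n1 m2 n2))) :
    ↥P → (Fin m1 ⊕ Fin m2) → Prop :=
  fun p i => ∃ v ∈ p.1, partOf v = i

variable {m1 n1 m2 n2 : ℕ}

/-- Incidence of the hypergraph `τ'(P)`: only the `m1` edges of size `n1` are kept. -/
def tauInc' (P : Set (Set (MPV m1 n1 m2 n2))) (p : ↥P) (j : Fin m1) : Prop :=
  tauInc P p (Sum.inl j)

/-- The label of a vertex of `τ'(P)`: the set of indices `i ≤ m2` with the vertex
incident to the `n2`-edge `X_i`. -/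
def labelOf (P : Set (Set (MPV m1 n1 m2 n2))) (p : ↥P) : Set (Fin m2) :=
  {i | tauInc P p (Sum.inr i)}

/-- The weight of a vertex of `τ'(P)`: the cardinality of its label. -/
noncomputable def wtv (P : Set (Set (MPV m1 n1 m2 n2))) (p : ↥P) : ℕ :=
  (labelOf P p).ncard

/-- The degree of a vertex in `τ'(P)`. -/
noncomputable def degE (P : Set (Set (MPV m1 n1 m2 n2))) (p : ↥P) : ℕ :=
  {j : Fin m1 | tauInc' P p j}.ncard

/-- The incidence (bipartite) graph of `τ'(P)`, used to speak about its connected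
components. -/
def incTG (P : Set (Set (MPV m1 n1 m2 n2))) : SimpleGraph (↥P ⊕ Fin m1) :=
  SimpleGraph.fromRel (fun a b => ∃ p j, a = Sum.inl p ∧ b = Sum.inr j ∧ tauInc' P p j)

/-- The vertex set of a connected component of `τ'(P)`. -/
def compV (P : Set (Set (MPV m1 n1 m2 n2))) (c : (incTG P).ConnectedComponent) :
    Set ↥P :=
  {p | (incTG P).connectedComponentMk (Sum.inl p) = c}

/-- The edge set of a connected component of `τ'(P)`. -/
def compE (P : Set (Set (MPV m1 n1 m2 n2))) (c : (incTG P).ConnectedComponent) :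
    Set (Fin m1) :=
  {j | (incTG P).connectedComponentMk (Sum.inr j) = c}

/-- The weight `w(G)` of a connected component `G` of `τ'(P)`. -/
noncomputable def wComp (P : Set (Set (MPV m1 n1 m2 n2)))
    (c : (incTG P).ConnectedComponent) : ℕ :=
  ∑ᶠ p ∈ compV P c, wtv P p

/-- `μ(G) = Σ_{v : deg v > 2} (deg v - 2)` for a component `G` of `τ'(P)`. -/
noncomputable def muComp (P : Set (Set (MPV m1 n1 m2 n2)))
    (c : (incTG P).ConnectedComponent) : ℕ :=
  ∑ᶠ p ∈ compV P c, (degE P p - 2)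

/-- `deg_1(e)`: the number of degree-1 vertices of the edge `e` of `τ'(P)`. -/
noncomputable def deg1E (P : Set (Set (MPV m1 n1 m2 n2))) (e : Fin m1) : ℕ :=
  {p | tauInc' P p e ∧ degE P p = 1}.ncard

/-- The total weight of the degree-1 vertices of the edge `e` of `τ'(P)`. -/
noncomputable def wSE (P : Set (Set (MPV m1 n1 m2 n2))) (e : Fin m1) : ℕ :=
  ∑ᶠ p ∈ {p | tauInc' P p e ∧ degE P p = 1}, wtv P p

/-- `Σ_{i=0}^{t-1} C(m,i)`. -/
def binPartial (m t : ℕ) : ℕ :=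
  ∑ i ∈ Finset.range t, Nat.choose m i

/-- The largest `t` (with `t = j' + 1` in the notation of the paper) such that
`Σ_{i=0}^{t-1} C(m,i) ≤ y`. -/
def wBt (m y : ℕ) : ℕ :=
  Nat.findGreatest (fun t => binPartial m t ≤ y) (m + 1)

/-- The quantity `w_y`: writing `y = Σ_{i=0}^{j'} C(m,i) + k'` with `j' ≥ -1` and either
`0 ≤ k' < C(m,j'+1)`, or `k' = 0` and `j' = m`, define
`w_y = Σ_{i=0}^{j'} (m-i)·C(m,i) + k'(m-j'-1)`. -/
def wB (m y : ℕ) : ℕ :=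
  (∑ i ∈ Finset.range (wBt m y), (m - i) * Nat.choose m i)
    + (y - binPartial m (wBt m y)) * (m - wBt m y)

/-- The number of defects `d(G)` of a component `G` of `τ'(P)`, counted with
multiplicity: each vertex `v` of degree at least `2` contributes `m2 - w(v)`, and
each edge `e` contributes `w_{deg_1 e}` minus the weight of its degree-1 vertices. -/
noncomputable def dComp (P : Set (Set (MPV m1 n1 m2 n2)))
    (c : (incTG P).ConnectedComponent) : ℕ :=
  (∑ᶠ p ∈ {p ∈ compV P c | 2 ≤ degE P p}, (m2 - wtv P p))
    + ∑ᶠ e ∈ compE P c, (wB m2 (deg1E P e) - wSE P e)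

/-!
Two degree-1 vertices of the same edge `e` of `τ'(P)` are incident to the same `n1`-edges, so if
they also had the same label, swapping them would be a nontrivial automorphism of `τ(P)`. Hence
the labels of the vertices of `S` are pairwise distinct subsets of an `m2`-set, and a family of
`|S|` distinct subsets has total size at most that of the `|S|` largest subsets.
-/

open Finset in
/-- Every set `A` contributes at most `m - t` plus its excess `#A - (m - t)`; summing the excess
over all subsets of `α` instead of over `F` gives the second term. -/
theorem sum_card_le_of_le_card {α : Type*} [Fintype α] (F : Finset (Finset α)) {t : ℕ}
    (ht : t ≤ Fintype.card α) :
    ∑ A ∈ F, #A ≤ (Fintype.card α - t) * #F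
      + ∑ i ∈ range t, (t - i) * (Fintype.card α).choose i := by
  set m := Fintype.card α
  have hexcess : ∑ A : Finset α, (#A - (m - t)) = ∑ i ∈ range t, (t - i) * m.choose i := by
    rw [← powerset_univ, sum_powerset_apply_card (fun k => k - (m - t)), card_univ,
      ← sum_range_reflect]
    calc ∑ j ∈ range (m + 1), m.choose (m + 1 - 1 - j) • (m + 1 - 1 - j - (m - t))
        = ∑ j ∈ range (m + 1), (t - j) * m.choose j :=
          sum_congr rfl fun j hj => by
            rw [smul_eq_mul, mul_comm, Nat.add_sub_cancel,
              Nat.choose_symm (by simpa [Nat.lt_succ_iff] using hj)]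
            congr 1
            omega
      _ = ∑ i ∈ range t, (t - i) * m.choose i := by
          refine (sum_subset (range_subset_range.2 (by omega)) fun j _ hj => ?_).symm
          simp only [mem_range, not_lt] at hj
          simp [Nat.sub_eq_zero_of_le hj]
  calc ∑ A ∈ F, #A ≤ ∑ A ∈ F, ((m - t) + (#A - (m - t))) :=
        sum_le_sum fun A _ => by omega
    _ = (m - t) * #F + ∑ A ∈ F, (#A - (m - t)) := by
        rw [sum_add_distrib, sum_const, smul_eq_mul, mul_comm]
    _ ≤ (m - t) * #F + ∑ A : Finset α, (#A - (m - t)) := by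
        gcongr
        exact subset_univ F
    _ = (m - t) * #F + ∑ i ∈ range t, (t - i) * m.choose i := by rw [hexcess]

open Finset in
theorem sum_card_le_of_card_eq {α : Type*} [Fintype α] (F : Finset (Finset α)) {t k : ℕ}
    (ht : t ≤ Fintype.card α)
    (hF : #F = ∑ i ∈ range t, (Fintype.card α).choose i + k) :
    ∑ A ∈ F, #A ≤ ∑ i ∈ range t, (Fintype.card α - i) * (Fintype.card α).choose i
      + k * (Fintype.card α - t) := by
  refine (sum_card_le_of_le_card F ht).trans_eq ?_
  rw [hF, mul_add, mul_sum, add_right_comm, mul_comm _ k, ← sum_add_distrib]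
  congr 1
  refine sum_congr rfl fun i hi => ?_
  rw [← add_mul]
  congr 1
  have := mem_range.1 hi
  omega

theorem HypAsymmetric.eq_of_forall_iff {Vh Eh : Type*} {I : Vh → Eh → Prop}
    (h : HypAsymmetric I) {u v : Vh} (huv : ∀ e, I u e ↔ I v e) : u = v := by
  classical
  have hswap : ∀ w e, I w e ↔ I (Equiv.swap u v w) ((1 : Equiv.Perm Eh) e) := by
    intro w e
    rcases eq_or_ne w u with rfl | hwu
    · simpa using huv e
    rcases eq_or_ne w v with rfl | hwv
    · simpa using (huv e).symm
    · simp [Equiv.swap_apply_of_ne_of_ne hwu hwv]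
  calc u = (1 : Equiv.Perm Vh) u := rfl
    _ = Equiv.swap u v u := by rw [(h _ _ hswap).1]
    _ = v := Equiv.swap_apply_left u v

theorem tauInc'_iff_of_degE_eq_one {P : Set (Set (MPV m1 n1 m2 n2))} {p : ↥P} {e : Fin m1}
    (he : tauInc' P p e) (hd : degE P p = 1) (j : Fin m1) : tauInc' P p j ↔ j = e := by
  obtain ⟨a, ha⟩ := Set.ncard_eq_one.1 hd
  have hea : e = a := by simpa [ha] using (show e ∈ {j | tauInc' P p j} from he)
  simpa [hea] using Set.ext_iff.1 ha j

theorem labelOf_injOn_degree_one {P : Set (Set (MPV m1 n1 m2 n2))}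
    (hasym : HypAsymmetric (tauInc P)) (e : Fin m1) :
    Set.InjOn (labelOf P) {p | tauInc' P p e ∧ degE P p = 1} := by
  rintro p ⟨hpe, hpd⟩ q ⟨hqe, hqd⟩ hlabel
  refine hasym.eq_of_forall_iff fun i => ?_
  cases i with
  | inl j =>
      exact (tauInc'_iff_of_degE_eq_one hpe hpd j).trans
        (tauInc'_iff_of_degE_eq_one hqe hqd j).symm
  | inr i => exact Set.ext_iff.1 hlabel i

open Finset in
theorem exists_family_of_injOn {ι α : Type*} [Finite ι] [Fintype α] {s : Set ι}
    {g : ι → Set α} (hg : s.InjOn g) :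
    ∃ F : Finset (Finset α), s.ncard = #F ∧ ∑ᶠ i ∈ s, (g i).ncard = ∑ A ∈ F, #A := by
  classical
  cases nonempty_fintype ι
  have hinj : (s.toFinset : Set ι).InjOn fun i => (g i).toFinset := by
    intro i hi j hj hij
    exact hg (by simpa using hi) (by simpa using hj) (by simpa using hij)
  refine ⟨s.toFinset.image fun i => (g i).toFinset, ?_, ?_⟩
  · rw [card_image_of_injOn hinj, Set.ncard_eq_toFinset_card']
  · rw [finsum_mem_eq_toFinset_sum, sum_image hinj]
    exact sum_congr rfl fun i _ => Set.ncard_eq_toFinset_card' (g i)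

theorem weight_degree_one_vertices_of_edge_general
    (m1 n1 m2 n2 : ℕ) (P : Set (Set (MPV m1 n1 m2 n2)))
    (hasym : HypAsymmetric (tauInc P))
    (e : Fin m1) (S : Set ↥P)
    (hS : S = {p | tauInc' P p e ∧ degE P p = 1}) :
    S.ncard ≤ 2 ^ m2 ∧
    ∀ t k' : ℕ,
      S.ncard = (∑ i ∈ Finset.range t, Nat.choose m2 i) + k' →
      (k' < Nat.choose m2 t ∨ (k' = 0 ∧ t = m2 + 1)) →
      (∑ᶠ p ∈ S, wtv P p)
        ≤ (∑ i ∈ Finset.range t, (m2 - i) * Nat.choose m2 i) + k' * (m2 - t) := by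
  obtain ⟨F, hcard, hweight⟩ :=
    exists_family_of_injOn (hS ▸ labelOf_injOn_degree_one hasym e : S.InjOn (labelOf P))
  have hsum := @sum_card_le_of_card_eq (Fin m2) _ F
  simp only [Fintype.card_fin] at hsum
  refine ⟨hcard ▸ (Finset.card_le_univ F).trans_eq (by simp), fun t k hF hk => ?_⟩
  rw [hcard] at hF
  unfold wtv
  rw [hweight]
  rcases hk with hk | ⟨rfl, rfl⟩
  · have ht : t ≤ m2 := by
      by_contra! h
      rw [Nat.choose_eq_zero_of_lt h] at hk
      omega
    exact hsum ht hF
  · rw [Finset.sum_range_succ] at hF ⊢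
    simpa using hsum le_rfl (by simpa using hF)

/-- **Lemma 4.2.** If `τ(P)` is asymmetric and `S` is the set of degree-1 vertices of an
edge of `τ'(P)`, then `|S| ≤ 2^{m2}`, and writing `|S| = Σ_{i=0}^{j'} C(m2,i) + k'`
(with `t = j' + 1`, so `j' ≥ -1` corresponds to `t ≥ 0`) where either
`0 ≤ k' < C(m2,j'+1)` or `k' = 0 ∧ j' = m2`, one has
`w(S) ≤ Σ_{i=0}^{j'} (m2-i)·C(m2,i) + k'(m2-j'-1)`. -/
theorem weight_degree_one_vertices_of_edge
    (m1 n1 m2 n2 : ℕ) (P : Set (Set (MPV m1 n1 m2 n2)))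
    (hreg : IsRegularPartition P) (hasym : HypAsymmetric (tauInc P))
    (e : Fin m1) (S : Set ↥P)
    (hS : S = {p | tauInc' P p e ∧ degE P p = 1}) :
    S.ncard ≤ 2 ^ m2 ∧
    ∀ t k' : ℕ,
      S.ncard = (∑ i ∈ Finset.range t, Nat.choose m2 i) + k' →
      (k' < Nat.choose m2 t ∨ (k' = 0 ∧ t = m2 + 1)) →
      (∑ᶠ p ∈ S, wtv P p)
        ≤ (∑ i ∈ Finset.range t, (m2 - i) * Nat.choose m2 i) + k' * (m2 - t) :=
  weight_degree_one_vertices_of_edge_general m1 n1 m2 n2 P hasym e S hS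
end

section
/- Let P be a regular partition of K_{m_1(n_1),m_2(n_2)} such that τ(P) is asymmetric, and let w(τ'(P)) be the sum of the weights of all vertices of τ'(P). Then w(τ'(P)) - r·m_2·m_1 ≤ Σ_G v(G) + m_2·2^{m_2-1}, where the sum ranges over the connected components G of τ'(P) that contain at least one edge. -/
variable {m1 n1 m2 n2 : ℕ}

/-!
Each edge of `τ'(P)` lies in exactly one component, so `r·m₂·m₁` splits as the sum of
`r·m₂·|E(G)|` over the components containing an edge, and `w(τ'(P))` splits as the sum of
their weights plus the weights of the isolated vertices. Two isolated vertices with the same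
label are incident to exactly the same edges of `τ(P)`, so swapping them is an automorphism;
asymmetry therefore makes the labels of isolated vertices pairwise distinct, and their total
weight is at most `Σ_{S ⊆ [m₂]} |S| = m₂·2^(m₂-1)`.
-/

open Function Set SimpleGraph

theorem HypAsymmetric.injective {Vh Eh : Type*} {I : Vh → Eh → Prop} (h : HypAsymmetric I) :
    Injective I := by
  classical
  intro v w hvw
  have hswap : ∀ u e, I u e ↔ I (Equiv.swap v w u) ((1 : Equiv.Perm Eh) e) := by
    intro u e
    rcases eq_or_ne u v with rfl | huv
    · simp [hvw]
    rcases eq_or_ne u w with rfl | huw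
    · simp [hvw]
    · simp [Equiv.swap_apply_of_ne_of_ne huv huw]
  by_contra hne
  exact hne (Equiv.swap_eq_one_iff.1 (h _ _ hswap).1)

theorem Fintype.finsum_ncard_set (α : Type*) [Fintype α] :
    ∑ᶠ s : Set α, s.ncard = Fintype.card α * 2 ^ (Fintype.card α - 1) := by
  rw [← finsum_comp_equiv Fintype.finsetEquivSet, finsum_eq_sum_of_fintype]
  simp only [Fintype.finsetEquivSet_apply, Set.ncard_coe_finset]
  rw [← Finset.powerset_univ, Finset.sum_powerset_apply_card (fun n => n), Finset.card_univ]
  simpa [mul_comm] using Nat.sum_range_mul_choose (Fintype.card α)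

theorem finsum_mem_fiberwise {α β M : Type*} [AddCommMonoid M] [Finite α] (f : α → β)
    {t : Set β} (ht : t.Finite) (g : α → M) :
    ∑ᶠ b ∈ t, ∑ᶠ a ∈ f ⁻¹' {b}, g a = ∑ᶠ a ∈ f ⁻¹' t, g a := by
  rw [← biUnion_preimage_singleton,
    finsum_mem_biUnion (pairwiseDisjoint_fiber f t) ht fun _ _ => toFinite _]

variable {P : Set (Set (MPV m1 n1 m2 n2))}

theorem incTG_adj_of_tauInc' {p : ↥P} {e : Fin m1} (h : tauInc' P p e) :
    (incTG P).Adj (.inl p) (.inr e) := by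
  rw [incTG, fromRel_adj]
  exact ⟨by simp, .inl ⟨p, e, rfl, rfl, h⟩⟩

theorem exists_tauInc'_of_incTG_adj {p : ↥P} {x : ↥P ⊕ Fin m1} (h : (incTG P).Adj (.inl p) x) :
    ∃ e, tauInc' P p e := by
  rw [incTG, fromRel_adj] at h
  obtain ⟨-, ⟨q, e, hq, -, he⟩ | ⟨_, _, -, hx, -⟩⟩ := h
  · cases hq
    exact ⟨e, he⟩
  · cases hx

theorem degE_eq_zero_iff {p : ↥P} : degE P p = 0 ↔ ∀ e, ¬ tauInc' P p e := by
  rw [degE, Set.ncard_eq_zero (toFinite _), Set.eq_empty_iff_forall_notMem]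
  rfl

theorem degE_ne_zero_iff_exists_connectedComponentMk_eq {p : ↥P} :
    degE P p ≠ 0 ↔ ∃ e, (incTG P).connectedComponentMk (.inr e)
      = (incTG P).connectedComponentMk (.inl p) := by
  rw [Ne, degE_eq_zero_iff, not_forall_not]
  constructor
  · rintro ⟨e, he⟩
    exact ⟨e, ConnectedComponent.sound (incTG_adj_of_tauInc' he).reachable.symm⟩
  · rintro ⟨e, he⟩
    obtain ⟨x, hx⟩ := (ConnectedComponent.exact he).symm.nonempty_neighborSet_left (by simp)
    exact exists_tauInc'_of_incTG_adj hx

theorem tauInc_eq_of_labelOf_eq {p q : ↥P} (hp : degE P p = 0) (hq : degE P q = 0)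
    (h : labelOf P p = labelOf P q) : tauInc P p = tauInc P q := by
  rw [degE_eq_zero_iff] at hp hq
  funext i
  rcases i with e | i
  · exact propext (iff_of_false (hp e) (hq e))
  · exact propext (Set.ext_iff.1 h i)

theorem HypAsymmetric.injOn_labelOf (hasym : HypAsymmetric (tauInc P)) :
    InjOn (labelOf P) {p | degE P p = 0} :=
  fun _ hp _ hq h => hasym.injective (tauInc_eq_of_labelOf_eq hp hq h)

theorem finsum_wtv_degE_eq_zero_le (hasym : HypAsymmetric (tauInc P)) :
    ∑ᶠ p ∈ {p | degE P p = 0}, wtv P p ≤ m2 * 2 ^ (m2 - 1) :=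
  calc ∑ᶠ p ∈ {p | degE P p = 0}, wtv P p
      = ∑ᶠ s ∈ labelOf P '' {p | degE P p = 0}, s.ncard :=
        (finsum_mem_image hasym.injOn_labelOf).symm
    _ ≤ ∑ᶠ s ∈ (univ : Set (Set (Fin m2))), s.ncard := by
        rw [← finsum_mem_add_sdiff (subset_univ _) (toFinite _)]
        exact Nat.le_add_right _ _
    _ = m2 * 2 ^ (m2 - 1) := by simpa using Fintype.finsum_ncard_set (Fin m2)

variable (P)

def edgeComponents : Set (incTG P).ConnectedComponent :=
  range fun e => (incTG P).connectedComponentMk (.inr e)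

theorem finsum_wtv_eq_finsum_wComp_add :
    ∑ᶠ p, wtv P p
      = ∑ᶠ c ∈ edgeComponents P, wComp P c + ∑ᶠ p ∈ {p | degE P p = 0}, wtv P p := by
  have hcomp : ∑ᶠ c ∈ edgeComponents P, wComp P c = ∑ᶠ p ∈ {p | degE P p ≠ 0}, wtv P p := by
    refine (finsum_mem_fiberwise (fun p => (incTG P).connectedComponentMk (.inl p))
      (toFinite _) (wtv P)).trans (finsum_mem_congr ?_ fun _ _ => rfl)
    ext p
    exact degE_ne_zero_iff_exists_connectedComponentMk_eq.symm
  have hcompl : univ \ {p | degE P p ≠ 0} = {p | degE P p = 0} := by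
    ext
    simp
  rw [hcomp, ← hcompl, finsum_mem_add_sdiff (subset_univ _) (toFinite _), finsum_mem_univ]

theorem finsum_ncard_compE : ∑ᶠ c ∈ edgeComponents P, (compE P c).ncard = m1 := by
  have h := finsum_mem_fiberwise (fun e : Fin m1 => (incTG P).connectedComponentMk (.inr e))
    (toFinite (edgeComponents P)) fun _ => 1
  simp only [finsum_one, edgeComponents, preimage_range, ncard_univ, Nat.card_eq_fintype_card,
    Fintype.card_fin] at h
  exact h

theorem total_value_bound_general
    (m1 n1 m2 n2 : ℕ) (r : ℝ)
    (P : Set (Set (MPV m1 n1 m2 n2)))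
    (hasym : HypAsymmetric (tauInc P)) :
    ((∑ᶠ p : ↥P, wtv P p : ℕ) : ℝ) - r * m2 * m1
      ≤ (∑ᶠ c ∈ {c : (incTG P).ConnectedComponent |
            ∃ e : Fin m1, (incTG P).connectedComponentMk (Sum.inr e) = c},
          ((wComp P c : ℝ) - r * m2 * (compE P c).ncard))
        + m2 * 2 ^ (m2 - 1) := by
  have hS : (edgeComponents P).Finite := toFinite _
  have hweight : ((∑ᶠ p, wtv P p : ℕ) : ℝ) = ∑ᶠ c ∈ edgeComponents P, (wComp P c : ℝ)
      + ((∑ᶠ p ∈ {p | degE P p = 0}, wtv P p : ℕ) : ℝ) := by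
    rw [finsum_wtv_eq_finsum_wComp_add, Nat.cast_add, Nat.cast_finsum_mem hS]
  have hedges : ∑ᶠ c ∈ edgeComponents P, ((compE P c).ncard : ℝ) = m1 := by
    rw [← Nat.cast_finsum_mem hS, finsum_ncard_compE]
  have hisolated : ((∑ᶠ p ∈ {p | degE P p = 0}, wtv P p : ℕ) : ℝ) ≤ m2 * 2 ^ (m2 - 1) := by
    exact_mod_cast finsum_wtv_degE_eq_zero_le hasym
  change _ ≤ ∑ᶠ c ∈ edgeComponents P, _ + _
  rw [finsum_mem_sub_distrib _ _ hS, ← mul_finsum_mem, hedges, hweight]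
  linarith

/-- **Lemma 4.8.** If `τ(P)` is asymmetric, then the value of `τ'(P)`, namely
`w(τ'(P)) - r·m2·m1`, is at most the sum of the values `v(G) = w(G) - r·m2·|E(G)|`
over the connected components `G` of `τ'(P)` containing at least one edge,
plus `m2·2^(m2-1)`. -/
theorem total_value_bound
    (m1 n1 m2 n2 : ℕ) (hn1 : 2 ≤ n1) (hm2 : 1 ≤ m2)
    (j : ℤ) (k : ℕ) (r : ℝ)
    (hj : -1 ≤ j)
    (hjk : (n1 : ℤ) = 2 + (∑ i ∈ Finset.range (j + 1).toNat, (Nat.choose m2 i : ℤ)) + k)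
    (hcond : (j < (((m2 - 1) / 2 : ℕ) : ℤ) ∧ (k : ℤ) < Nat.choose m2 (j + 1).toNat)
      ∨ j = (((m2 - 1) / 2 : ℕ) : ℤ))
    (hr : r = 1 + (∑ i ∈ Finset.range (j + 1).toNat, ((m2 - i : ℝ) / m2) * Nat.choose m2 i)
      + (if j < (((m2 - 1) / 2 : ℕ) : ℤ) then (((m2 : ℝ) - j - 1) / m2) * k
          else (k : ℝ) / 2))
    (P : Set (Set (MPV m1 n1 m2 n2)))
    (hreg : IsRegularPartition P) (hasym : HypAsymmetric (tauInc P)) :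
    ((∑ᶠ p : ↥P, wtv P p : ℕ) : ℝ) - r * m2 * m1
      ≤ (∑ᶠ c ∈ {c : (incTG P).ConnectedComponent |
            ∃ e : Fin m1, (incTG P).connectedComponentMk (Sum.inr e) = c},
          ((wComp P c : ℝ) - r * m2 * (compE P c).ncard))
        + m2 * 2 ^ (m2 - 1) :=
  total_value_bound_general m1 n1 m2 n2 r P hasym
end
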